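/- Let R be a commutative ring, S a multiplicative subset, and E an R-module. Then E is u-S-injective if and only if for every injective R-homomorphism f : A → B and every R-homomorphism h : A → E, there exist an R-homomorphism g : B → E and s ∈ S such that s·h = g ∘ f. -/

import Mathlib

open CategoryTheory

universe u

def IsUSTorsionMod {R : Type u} [CommRing R] (S : Submonoid R) (X : ModuleCat.{u} R) : Prop :=
  ∃ s ∈ S, ∀ x : X, s • x = 0

def IsUSTorsion {R : Type u} [CommRing R] (S : Submonoid R) (T : Type u)
    [AddCommGroup T] [Module R T] : Prop :=
  ∃ s ∈ S, ∀ x : T, s • x = 0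

noncomputable def ext (R : Type u) [CommRing R] (n : ℕ) (P M : ModuleCat.{u} R) :
    ModuleCat.{u} R :=
  ((Ext R (ModuleCat.{u} R) n).obj (Opposite.op P)).obj M

def IsUSProjective {R : Type u} [CommRing R] (S : Submonoid R) (P : Type u)
    [AddCommGroup P] [Module R P] : Prop :=
  ∀ M : ModuleCat.{u} R, IsUSTorsionMod S (ext R 1 (ModuleCat.of R P) M)

def IsUSInjective {R : Type u} [CommRing R] (S : Submonoid R) (E : Type u)
    [AddCommGroup E] [Module R E] : Prop :=
  ∀ M : ModuleCat.{u} R, IsUSTorsionMod S (ext R 1 M (ModuleCat.of R E))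


/-! Computed from a projective resolution `P` of `M`, `Ext¹(M, E)` is killed by `s` iff `s • h`
extends from `K = ker (P₀ → M)` to `P₀` for every `h : K → E`. For `f : A ↪ B`, resolve
`M = B ⧸ A`: lifting `P₀ → M` to `P₀ → B` restricts to a map `K → A`, and since `B` is the
pushout of `A ← K → P₀`, an extension of `s • (h ∘ (K → A))` to `P₀` glues with `s • h` to a map
on `B`. Conversely, one `s` serving all `h` at once comes from the lifting property applied to a
direct sum of copies of `f`. -/

section

variable {R : Type u} [CommRing R] {S : Submonoid R}

theorem IsUSTorsionMod.of_iso {X Y : ModuleCat.{u} R} (e : X ≅ Y) (hY : IsUSTorsionMod S Y) :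
    IsUSTorsionMod S X := by
  obtain ⟨s, hs, hsY⟩ := hY
  refine ⟨s, hs, fun x => e.toLinearEquiv.injective ?_⟩
  rw [map_smul, map_zero]
  exact hsY _

theorem isUSTorsionMod_iff_of_iso {X Y : ModuleCat.{u} R} (e : X ≅ Y) :
    IsUSTorsionMod S X ↔ IsUSTorsionMod S Y :=
  ⟨IsUSTorsionMod.of_iso e.symm, IsUSTorsionMod.of_iso e⟩

theorem isUSTorsionMod_quotient_iff {M : Type u} [AddCommGroup M] [Module R M]
    (N : Submodule R M) :
    IsUSTorsionMod S (ModuleCat.of R (M ⧸ N)) ↔ ∃ s ∈ S, ∀ x : M, s • x ∈ N := by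
  refine exists_congr fun s => and_congr_right fun _ => ?_
  refine ⟨fun hs x => ?_, fun hs q => ?_⟩
  · rw [← Submodule.Quotient.mk_eq_zero, Submodule.Quotient.mk_smul]
    exact hs _
  · obtain ⟨x, rfl⟩ := Submodule.Quotient.mk_surjective _ q
    rw [← Submodule.Quotient.mk_smul, Submodule.Quotient.mk_eq_zero]
    exact hs x

theorem CategoryTheory.ShortComplex.isUSTorsionMod_homology_iff
    (T : ShortComplex (ModuleCat.{u} R)) :
    IsUSTorsionMod S T.homology ↔ ∃ s ∈ S, ∀ x : T.X₂, T.g x = 0 → ∃ y, T.f y = s • x := by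
  rw [isUSTorsionMod_iff_of_iso T.moduleCatHomologyIso, moduleCatLeftHomologyData_H,
    isUSTorsionMod_quotient_iff]
  refine exists_congr fun s => and_congr_right fun _ => ⟨fun hs x hx => ?_, fun hs x => ?_⟩
  · obtain ⟨y, hy⟩ := hs ⟨x, hx⟩
    exact ⟨y, congrArg Subtype.val hy⟩
  · obtain ⟨y, hy⟩ := hs x x.2
    exact ⟨y, Subtype.ext hy⟩

theorem Function.Exact.exists_comp_eq_of_comp_eq_zero {E M₁ M₂ M₃ : Type*} [AddCommGroup E]
    [Module R E] [AddCommGroup M₁] [Module R M₁] [AddCommGroup M₂] [Module R M₂]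
    [AddCommGroup M₃] [Module R M₃] {f : M₁ →ₗ[R] M₂} {g : M₂ →ₗ[R] M₃}
    (hfg : Function.Exact f g) (hg : Function.Surjective g) {h : M₂ →ₗ[R] E}
    (hh : h ∘ₗ f = 0) : ∃ h' : M₃ →ₗ[R] E, h' ∘ₗ g = h :=
  (LinearMap.exact_lcomp_of_exact_of_surjective E hfg hg h).1 hh

theorem LinearMap.exists_comp_eq_of_range_le {K A B : Type*} [AddCommGroup K] [Module R K]
    [AddCommGroup A] [Module R A] [AddCommGroup B] [Module R B] {f : A →ₗ[R] B}
    (hf : Function.Injective f) {g : K →ₗ[R] B} (hgf : LinearMap.range g ≤ LinearMap.range f) :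
    ∃ α : K →ₗ[R] A, f ∘ₗ α = g := by
  refine ⟨(LinearEquiv.ofInjective f hf).symm ∘ₗ g.codRestrict _ fun k => hgf ⟨k, rfl⟩, ?_⟩
  ext k
  simp

def ExtendsUpToSMul (E : Type*) [AddCommGroup E] [Module R E] {A B : Type*}
    [AddCommGroup A] [Module R A] [AddCommGroup B] [Module R B] (s : R) (f : A →ₗ[R] B) : Prop :=
  ∀ h : A →ₗ[R] E, ∃ g : B →ₗ[R] E, g ∘ₗ f = s • h

theorem extendsUpToSMul_range_subtype_iff {E M₁ M₂ M₃ : Type*} [AddCommGroup E] [Module R E]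
    [AddCommGroup M₁] [Module R M₁] [AddCommGroup M₂] [Module R M₂]
    [AddCommGroup M₃] [Module R M₃] {f : M₁ →ₗ[R] M₂} {g : M₂ →ₗ[R] M₃}
    (hfg : Function.Exact f g) (s : R) :
    ExtendsUpToSMul E s (LinearMap.range g).subtype ↔
      ∀ h : M₂ →ₗ[R] E, h ∘ₗ f = 0 → ∃ φ : M₃ →ₗ[R] E, φ ∘ₗ g = s • h := by
  refine ⟨fun hs h hf => ?_, fun hs h => ?_⟩
  · have hexact : Function.Exact f g.rangeRestrict := by
      simpa [Function.Exact, ← LinearMap.mem_ker, LinearMap.ker_rangeRestrict] using hfg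
    obtain ⟨h', rfl⟩ := hexact.exists_comp_eq_of_comp_eq_zero g.surjective_rangeRestrict hf
    obtain ⟨φ, hφ⟩ := hs h'
    exact ⟨φ, LinearMap.ext fun x => LinearMap.congr_fun hφ (g.rangeRestrict x)⟩
  · obtain ⟨φ, hφ⟩ := hs (h ∘ₗ g.rangeRestrict) (by
      ext x
      have hx : g.rangeRestrict (f x) = 0 := Subtype.ext (hfg.apply_apply_eq_zero x)
      simp [hx])
    refine ⟨φ, ?_⟩
    ext ⟨_, y, rfl⟩
    exact LinearMap.congr_fun hφ y

theorem isUSTorsionMod_ext_one_iff {M : ModuleCat.{u} R} (P : ProjectiveResolution M)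
    (E : Type u) [AddCommGroup E] [Module R E] :
    IsUSTorsionMod S (ext R 1 M (ModuleCat.of R E)) ↔
      ∃ s ∈ S, ExtendsUpToSMul E s (LinearMap.range (P.complex.d 1 0).hom).subtype := by
  let K := P.complex.linearYonedaObj R (ModuleCat.of R E)
  rw [isUSTorsionMod_iff_of_iso (X := ext R 1 M _) (P.isoExt 1 _ ≪≫
      ShortComplex.homologyMapIso (K.isoSc' 0 1 2 (by simp) (by simp))),
    ShortComplex.isUSTorsionMod_homology_iff]
  refine exists_congr fun s => and_congr_right fun _ => ?_
  rw [extendsUpToSMul_range_subtype_iff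
    ((ShortComplex.ShortExact.moduleCat_exact_iff_function_exact _).1 (P.exact_succ 0))]
  refine ⟨fun H h hh => ?_, fun H h hh => ?_⟩
  · obtain ⟨φ, hφ⟩ := H (ModuleCat.ofHom h) (ModuleCat.hom_ext hh)
    exact ⟨φ.hom, congrArg ModuleCat.Hom.hom hφ⟩
  · obtain ⟨φ, hφ⟩ := H h.hom (congrArg ModuleCat.Hom.hom hh)
    exact ⟨ModuleCat.ofHom φ, ModuleCat.hom_ext hφ⟩

theorem ExtendsUpToSMul.of_exact {E K P M A B : Type*} [AddCommGroup E] [Module R E]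
    [AddCommGroup K] [Module R K] [AddCommGroup P] [Module R P] [Module.Projective R P]
    [AddCommGroup M] [Module R M] [AddCommGroup A] [Module R A] [AddCommGroup B] [Module R B]
    {ι : K →ₗ[R] P} {ε : P →ₗ[R] M} (hιε : Function.Exact ι ε) (hε : Function.Surjective ε)
    {f : A →ₗ[R] B} {q : B →ₗ[R] M} (hf : Function.Injective f) (hfq : Function.Exact f q)
    (hq : Function.Surjective q) {s : R} (hs : ExtendsUpToSMul E s ι) :
    ExtendsUpToSMul E s f := by
  intro h
  obtain ⟨β, hβ⟩ := Module.projective_lifting_property q ε hq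
  have hqβ (x : P) : q (β x) = ε x := LinearMap.congr_fun hβ x
  obtain ⟨α, hα⟩ := LinearMap.exists_comp_eq_of_range_le hf (g := β ∘ₗ ι) <| by
    rintro _ ⟨k, rfl⟩
    exact (hfq _).1 (by simp [hqβ, hιε.apply_apply_eq_zero])
  obtain ⟨φ, hφ⟩ := hs (h ∘ₗ α)
  -- `B` is the pushout of `A ← K → P`, so `s • h` and `φ` glue to a map on `B`.
  let Φ := f.coprod β
  have hΦ : Function.Surjective Φ := by
    intro b
    obtain ⟨x, hx⟩ := hε (q b)
    obtain ⟨a, ha⟩ := (hfq (b - β x)).1 (by simp [hqβ, hx])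
    exact ⟨(a, x), by simp [Φ, ha]⟩
  obtain ⟨g, hg⟩ := (LinearMap.exact_subtype_ker_map Φ).exists_comp_eq_of_comp_eq_zero hΦ
    (h := (s • h).coprod φ) <| by
    ext ⟨⟨a, x⟩, hax⟩
    have hax : β x = -f a := eq_neg_of_add_eq_zero_right hax
    obtain ⟨k, rfl⟩ := (hιε x).1 (by simp [← hqβ, hax, hfq.apply_apply_eq_zero])
    have hk : α k = -a := hf (by simpa [hax] using LinearMap.congr_fun hα k)
    have hφk : φ (ι k) = s • h (α k) := LinearMap.congr_fun hφ k
    simp [hφk, hk]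
  exact ⟨g, LinearMap.ext fun a => by simpa [Φ] using LinearMap.congr_fun hg (a, 0)⟩

theorem exists_mem_extendsUpToSMul {E : Type u} [AddCommGroup E] [Module R E]
    (H : ∀ (A B : Type u) [AddCommGroup A] [Module R A] [AddCommGroup B] [Module R B]
      (f : A →ₗ[R] B), Function.Injective f →
      ∀ h : A →ₗ[R] E, ∃ (g : B →ₗ[R] E), ∃ s ∈ S, ∀ a : A, s • h a = g (f a))
    {A B : Type u} [AddCommGroup A] [Module R A] [AddCommGroup B] [Module R B]
    {f : A →ₗ[R] B} (hf : Function.Injective f) :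
    ∃ s ∈ S, ExtendsUpToSMul E s f := by
  -- Lift the map `(h, a) ↦ h a` out of the direct sum of copies of `A` indexed by all `h`.
  obtain ⟨G, s, hs, hG⟩ := H _ _ (Finsupp.mapRange.linearMap (α := A →ₗ[R] E) f)
    (Finsupp.mapRange_injective _ (map_zero f) hf) (Finsupp.lsum R id)
  refine ⟨s, hs, fun h => ⟨G ∘ₗ Finsupp.lsingle h, LinearMap.ext fun a => ?_⟩⟩
  simpa using (hG (Finsupp.single h a)).symm

end

theorem uS_injective_iff_lifting
    {R : Type u} [CommRing R] (S : Submonoid R)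
    (E : Type u) [AddCommGroup E] [Module R E] :
    IsUSInjective S E ↔
      ∀ (A B : Type u) [AddCommGroup A] [Module R A] [AddCommGroup B] [Module R B]
        (f : A →ₗ[R] B), Function.Injective f →
        ∀ h : A →ₗ[R] E, ∃ (g : B →ₗ[R] E), ∃ s ∈ S, ∀ a : A, s • h a = g (f a) := by
  refine ⟨fun hE A B _ _ _ _ f hf h => ?_, fun H M => ?_⟩
  · let P := ProjectiveResolution.of (ModuleCat.of R (B ⧸ LinearMap.range f))
    obtain ⟨s, hs, hsP⟩ := (isUSTorsionMod_ext_one_iff P E).1 (hE _)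
    have hP : Function.Exact (LinearMap.range (P.complex.d 1 0).hom).subtype (P.π.f 0).hom :=
      LinearMap.exact_iff.2 (by rw [Submodule.range_subtype, P.exact₀.moduleCat_range_eq_ker])
    obtain ⟨g, hg⟩ := hsP.of_exact hP ((ModuleCat.epi_iff_surjective _).1 inferInstance) hf
      (LinearMap.exact_map_mkQ_range f) (Submodule.mkQ_surjective _) h
    exact ⟨g, s, hs, fun a => (LinearMap.congr_fun hg a).symm⟩
  · let P := ProjectiveResolution.of M
    exact (isUSTorsionMod_ext_one_iff P E).2
      (exists_mem_extendsUpToSMul H (Submodule.injective_subtype _))
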